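/- arXiv:2402.13079 — 6 statements merged into one kernel-verified Lean document; each statement's English description precedes it below -/
import Mathlib

section
/- Fix a = 1 - p(y_1) - p(y_2) and b = 4 p(y_1) p(y_2) with p(y_1) > p(y_2) > 0 and a ≥ 0. For λ ∈ [0, 1/a] (or [0,∞) if a=0), define f(λ) = ((1 - aλ)/2) log((1 - aλ)²/b) + aλ log λ. Then f is minimized at λ₊ = 1/(a + √b) = 1/(1 - (√p(y_1) - √p(y_2))²), and f(λ₊) = log λ₊ = -log(1 - (√p(y_1) - √p(y_2))²). -/
/-!
Writing `s = √b` and using `(1 - aλ)² / b = ((1 - aλ) / s)²`, `f λ` is the relative entropy of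
the two-point distribution `(1 - aλ, aλ)` with respect to the (unnormalized) weights `(s, a)`.
The log-sum inequality bounds it below by `log (1 / (a + s)) = log λ₊`, with equality at
`λ = λ₊`, where `(1 - aλ, aλ)` is proportional to `(s, a)`. Finally
`a + √(4 p₁ p₂) = 1 - (√p₁ - √p₂)²`.
-/

open Real Finset

namespace Real

lemma sub_le_mul_log_div {x c : ℝ} (hx : 0 ≤ x) (hc : 0 ≤ c) (hxc : c = 0 → x = 0) :
    x - c ≤ x * log (x / c) := by
  rcases hc.eq_or_lt with rfl | hc
  · simp [hxc rfl]
  have key := mul_le_mul_of_nonneg_left (self_sub_one_le_mul_log (div_nonneg hx hc.le)) hc.le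
  calc x - c = c * (x / c - 1) := by field_simp
    _ ≤ c * (x / c * log (x / c)) := key
    _ = x * log (x / c) := by field_simp

/-- The log-sum inequality. -/
theorem mul_log_div_sum_le_sum_mul_log_div {ι : Type*} (s : Finset ι) {x c : ι → ℝ}
    (hx : ∀ i ∈ s, 0 ≤ x i) (hc : ∀ i ∈ s, 0 ≤ c i) (hxc : ∀ i ∈ s, c i = 0 → x i = 0) :
    (∑ i ∈ s, x i) * log ((∑ i ∈ s, x i) / ∑ i ∈ s, c i) ≤ ∑ i ∈ s, x i * log (x i / c i) := by
  rcases (sum_nonneg hx).eq_or_lt with hX | hX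
  · have hx0 : ∀ i ∈ s, x i = 0 := (sum_eq_zero_iff_of_nonneg hx).mp hX.symm
    rw [sum_eq_zero hx0, zero_mul, sum_eq_zero fun i hi => by simp [hx0 i hi]]
  obtain ⟨j, hj, hxj⟩ : ∃ j ∈ s, 0 < x j := by
    simpa using exists_lt_of_sum_lt (f := fun _ => (0 : ℝ)) (by simpa using hX)
  have hC : 0 < ∑ i ∈ s, c i :=
    sum_pos' hc ⟨j, hj, (hc j hj).lt_of_ne' fun h => hxj.ne' (hxc j hj h)⟩
  set r := (∑ i ∈ s, x i) / ∑ i ∈ s, c i with hr_def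
  have hr : 0 < r := div_pos hX hC
  have term : ∀ i ∈ s, x i - c i * r ≤ x i * log (x i / c i) - x i * log r := by
    intro i hi
    have hci : c i * r = 0 → x i = 0 := fun h =>
      hxc i hi ((mul_eq_zero.mp h).resolve_right hr.ne')
    refine (sub_le_mul_log_div (hx i hi) (mul_nonneg (hc i hi) hr.le) hci).trans_eq ?_
    rcases (hx i hi).eq_or_lt with h0 | hpos
    · simp [← h0]
    have hci_pos : 0 < c i := (hc i hi).lt_of_ne' fun h => hpos.ne' (hxc i hi h)
    rw [← div_div, log_div (by positivity) hr.ne', mul_sub]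
  have total := sum_le_sum term
  rw [sum_sub_distrib, sum_sub_distrib, ← sum_mul, ← sum_mul, hr_def,
    mul_div_cancel₀ _ hC.ne'] at total
  linarith

theorem add_mul_log_div_add_le {x y c d : ℝ} (hx : 0 ≤ x) (hy : 0 ≤ y) (hc : 0 < c) (hd : 0 ≤ d)
    (hdy : d = 0 → y = 0) :
    (x + y) * log ((x + y) / (c + d)) ≤ x * log (x / c) + y * log (y / d) := by
  simpa [Fin.sum_univ_two] using mul_log_div_sum_le_sum_mul_log_div univ
    (x := ![x, y]) (c := ![c, d]) (by simp [Fin.forall_fin_two, hx, hy])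
    (by simp [Fin.forall_fin_two, hc.le, hd]) (by simpa [Fin.forall_fin_two, hc.ne'] using hdy)

lemma half_mul_log_sq_div_sq (u s : ℝ) : u / 2 * log (u ^ 2 / s ^ 2) = u * log (u / s) := by
  rw [← div_pow, log_pow]
  push_cast
  ring

lemma mul_mul_log_eq_mul_log_mul_div (a t : ℝ) : a * t * log t = a * t * log (a * t / a) := by
  rcases eq_or_ne a 0 with rfl | ha
  · simp
  · rw [mul_div_cancel_left₀ _ ha]

lemma sqrt_sub_sqrt_sq {x y : ℝ} (hx : 0 ≤ x) (hy : 0 ≤ y) :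
    (√x - √y) ^ 2 = x + y - √(4 * x * y) := by
  have h4 : √(4 * x * y) = 2 * √x * √y := by
    rw [sqrt_mul (by positivity), sqrt_mul (by norm_num), show (4 : ℝ) = 2 ^ 2 by norm_num,
      sqrt_sq zero_le_two]
  rw [h4, sub_sq, sq_sqrt hx, sq_sqrt hy]
  ring

end Real

theorem lambda_optimization (p1 p2 : ℝ) (h21 : p2 < p1) (h2 : 0 < p2) (hsum : p1 + p2 ≤ 1) :
    let a := 1 - p1 - p2
    let b := 4 * p1 * p2
    let f : ℝ → ℝ := fun lam =>
      ((1 - a * lam) / 2) * Real.log ((1 - a * lam) ^ 2 / b) + a * lam * Real.log lam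
    let lamp := 1 / (a + Real.sqrt b)
    (∀ lam : ℝ, 0 ≤ lam → a * lam ≤ 1 → f lamp ≤ f lam) ∧
    lamp = 1 / (1 - (Real.sqrt p1 - Real.sqrt p2) ^ 2) ∧
    f lamp = Real.log lamp ∧
    f lamp = -Real.log (1 - (Real.sqrt p1 - Real.sqrt p2) ^ 2) := by
  intro a b f lamp
  have hp1 : 0 < p1 := h2.trans h21
  have ha : 0 ≤ a := by simp only [a]; linarith
  have hs : 0 < √b := sqrt_pos.mpr (by positivity)
  have hf : ∀ lam, f lam = (1 - a * lam) * log ((1 - a * lam) / √b) + a * lam * log lam := by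
    intro lam
    rw [← half_mul_log_sq_div_sq, sq_sqrt (by positivity)]
  have hsqrt : a + √b = 1 - (√p1 - √p2) ^ 2 := by
    simp only [a, b, sqrt_sub_sqrt_sq hp1.le h2.le]
    ring
  have hlamp : (a + √b) * lamp = 1 := mul_one_div_cancel (by positivity)
  have hf_lamp : f lamp = log lamp := by
    have h1 : 1 - a * lamp = √b * lamp := by linarith
    rw [hf, h1, mul_div_cancel_left₀ _ hs.ne']
    linear_combination log lamp * hlamp
  have hlog_lamp : log lamp = -log (a + √b) := by rw [← log_inv, ← one_div]
  refine ⟨fun lam hlam hlam1 => ?_, by rw [← hsqrt], hf_lamp, by rw [hf_lamp, hlog_lamp, hsqrt]⟩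
  have hls := add_mul_log_div_add_le (sub_nonneg.mpr hlam1) (mul_nonneg ha hlam) hs ha
    (fun h => by simp [h])
  rw [sub_add_cancel, one_mul, add_comm √b, ← mul_mul_log_eq_mul_log_mul_div] at hls
  rw [hf_lamp, hf]
  exact hls
end

section
/- Let p be a probability distribution on a finite set with p(y_1) > p(y_i). Let Y_1,…,Y_n be i.i.d. samples from p. Then P(Σ_{j=1}^n (1{Y_j = y_1} - 1{Y_j = y_i}) ≤ 0) ≤ exp(-n Δ_i²), where Δ_i² = -ln(1 - (√p(y_1) - √p(y_i))²). -/
open Finset Real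

/-!
Replacing the masses `a = p y₁` and `b = p yᵢ` by their geometric mean `√(a b)` gives a
sub-probability `q` of total mass `1 - (√a - √b)²`. On every sample in which `y₁` occurs `k`
times and `yᵢ` occurs `l ≥ k` times, the product weight under `p` is at most the one under `q`,
because `aᵏ bˡ ≤ √(ab)ᵏ⁺ˡ` when `b ≤ a`. Summing the `q`-weights over all samples bounds the
probability by `(1 - (√a - √b)²)ⁿ`. This is the Chernoff bound with the optimal tilt
`√(b / a)`, rewritten so that it stays valid when `b = 0`.
-/

section

variable {ι Y M : Type*} [Fintype ι]

theorem sum_prod_le_pow_sum_of_forall_prod_le [DecidableEq ι] [Fintype Y] {w q : Y → ℝ}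
    (hq : ∀ y, 0 ≤ q y) (S : Finset (ι → Y)) (h : ∀ ω ∈ S, ∏ i, w (ω i) ≤ ∏ i, q (ω i)) :
    ∑ ω ∈ S, ∏ i, w (ω i) ≤ (∑ y, q y) ^ Fintype.card ι :=
  calc ∑ ω ∈ S, ∏ i, w (ω i) ≤ ∑ ω ∈ S, ∏ i, q (ω i) := sum_le_sum h
    _ ≤ ∑ ω : ι → Y, ∏ i, q (ω i) :=
      sum_le_univ_sum_of_nonneg fun ω => prod_nonneg fun i _ => hq (ω i)
    _ = (∑ y, q y) ^ Fintype.card ι := by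
      rw [← Fintype.prod_sum fun _ => q, prod_const, card_univ]

theorem prod_comp_eq_pow_mul_pow_mul [DecidableEq Y] [CommMonoid M] (f : Y → M) (ω : ι → Y)
    {a b : Y} (hab : a ≠ b) :
    ∏ i, f (ω i) =
      f a ^ #{i | ω i = a} * f b ^ #{i | ω i = b} * ∏ i with ω i ≠ a ∧ ω i ≠ b, f (ω i) := by
  have hb : univ.filter (fun i => ω i ≠ a ∧ ω i = b) = univ.filter (fun i => ω i = b) :=
    filter_congr fun i _ => and_iff_right_of_imp fun h => h ▸ hab.symm
  rw [← prod_filter_mul_prod_filter_not univ (fun i => ω i = a),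
    ← prod_filter_mul_prod_filter_not {i | ω i ≠ a} (fun i => ω i = b), filter_filter,
    filter_filter, hb, prod_eq_pow_card fun i hi => congrArg f (mem_filter.1 hi).2,
    prod_eq_pow_card fun i hi => congrArg f (mem_filter.1 hi).2, mul_assoc]

theorem card_le_card_of_sum_sub_nonpos [DecidableEq Y] {ω : ι → Y} {a b : Y}
    (h : ∑ i, ((if ω i = a then (1 : ℝ) else 0) - (if ω i = b then (1 : ℝ) else 0)) ≤ 0) :
    #{i | ω i = a} ≤ #{i | ω i = b} := by
  rwa [sum_sub_distrib, sum_boole, sum_boole, sub_nonpos, Nat.cast_le] at h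

end

theorem pow_mul_pow_le_sqrt_mul_pow_add {a b : ℝ} (hb : 0 ≤ b) (hba : b ≤ a) {k l : ℕ}
    (hkl : k ≤ l) : a ^ k * b ^ l ≤ √(a * b) ^ (k + l) := by
  obtain ⟨d, rfl⟩ := Nat.exists_eq_add_of_le hkl
  have hb_le : b ≤ √(a * b) :=
    calc b = √(b * b) := (sqrt_mul_self hb).symm
      _ ≤ √(a * b) := sqrt_le_sqrt (mul_le_mul_of_nonneg_right hba hb)
  calc a ^ k * b ^ (k + d) = √(a * b) ^ (2 * k) * b ^ d := by
        rw [pow_mul, sq_sqrt (mul_nonneg (hb.trans hba) hb), pow_add, mul_pow]; ring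
    _ ≤ √(a * b) ^ (2 * k) * √(a * b) ^ d := by gcongr
    _ = √(a * b) ^ (k + (k + d)) := by ring

theorem pow_le_exp_mul_log {c : ℝ} (hc : 0 ≤ c) (n : ℕ) : c ^ n ≤ exp (n * log c) := by
  rcases hc.eq_or_lt with rfl | hc
  · rw [log_zero, mul_zero, exp_zero]
    exact pow_le_one₀ le_rfl zero_le_one
  · rw [exp_nat_mul, exp_log hc]

section

variable {Y : Type*} [DecidableEq Y]

noncomputable def replaceByGeomMean (p : Y → ℝ) (a b : Y) (y : Y) : ℝ :=
  if y = a ∨ y = b then √(p a * p b) else p y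

theorem replaceByGeomMean_nonneg {p : Y → ℝ} (hp : ∀ y, 0 ≤ p y) (a b y : Y) :
    0 ≤ replaceByGeomMean p a b y := by
  unfold replaceByGeomMean
  split_ifs
  exacts [sqrt_nonneg _, hp y]

theorem sum_replaceByGeomMean [Fintype Y] {p : Y → ℝ} {a b : Y} (hab : a ≠ b) (ha : 0 ≤ p a)
    (hb : 0 ≤ p b) :
    ∑ y, replaceByGeomMean p a b y = ∑ y, p y - (√(p a) - √(p b)) ^ 2 := by
  have hpt : ∀ y, replaceByGeomMean p a b y = p y + (if y = a then √(p a * p b) - p a else 0) +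
      (if y = b then √(p a * p b) - p b else 0) := by
    intro y
    unfold replaceByGeomMean
    by_cases hya : y = a
    · subst hya; simp [hab]
    · by_cases hyb : y = b
      · subst hyb; simp [hya]
      · simp [hya, hyb]
  simp only [hpt, sum_add_distrib, sum_ite_eq', mem_univ, if_true]
  rw [sqrt_mul ha, sub_sq, sq_sqrt ha, sq_sqrt hb]
  ring

theorem prod_le_prod_replaceByGeomMean {ι : Type*} [Fintype ι] {p : Y → ℝ} (hp : ∀ y, 0 ≤ p y)
    {a b : Y} (hab : a ≠ b) (hba : p b ≤ p a) (ω : ι → Y)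
    (h : #{i | ω i = a} ≤ #{i | ω i = b}) :
    ∏ i, p (ω i) ≤ ∏ i, replaceByGeomMean p a b (ω i) := by
  have hrest : ∏ i with ω i ≠ a ∧ ω i ≠ b, replaceByGeomMean p a b (ω i) =
      ∏ i with ω i ≠ a ∧ ω i ≠ b, p (ω i) :=
    prod_congr rfl fun i hi => if_neg (not_or.2 (mem_filter.1 hi).2)
  rw [prod_comp_eq_pow_mul_pow_mul p ω hab, prod_comp_eq_pow_mul_pow_mul _ ω hab, hrest]
  unfold replaceByGeomMean
  rw [if_pos (Or.inl rfl), if_pos (Or.inr rfl), ← pow_add]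
  exact mul_le_mul_of_nonneg_right (pow_mul_pow_le_sqrt_mul_pow_add (hp b) hba h)
    (prod_nonneg fun i _ => hp (ω i))

end

theorem chernoff_pairwise {Y : Type*} [Fintype Y] [DecidableEq Y]
    (p : Y → ℝ) (hp0 : ∀ y, 0 ≤ p y) (hp1 : ∑ y, p y = 1)
    (y1 yi : Y) (hne : y1 ≠ yi) (hlt : p yi < p y1) (n : ℕ) :
    ∑ ω ∈ Finset.univ.filter (fun ω : Fin n → Y =>
        (∑ j, ((if ω j = y1 then (1:ℝ) else 0) - (if ω j = yi then (1:ℝ) else 0))) ≤ 0),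
      ∏ j, p (ω j)
    ≤ Real.exp (-(n : ℝ) * (-Real.log (1 - (Real.sqrt (p y1) - Real.sqrt (p yi)) ^ 2))) := by
  set q := replaceByGeomMean p y1 yi
  have hq : ∀ y, 0 ≤ q y := replaceByGeomMean_nonneg hp0 y1 yi
  have hsum : ∑ y, q y = 1 - (√(p y1) - √(p yi)) ^ 2 := by
    rw [sum_replaceByGeomMean hne (hp0 y1) (hp0 yi), hp1]
  calc _ ≤ (∑ y, q y) ^ Fintype.card (Fin n) :=
        sum_prod_le_pow_sum_of_forall_prod_le hq _ fun ω hω =>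
          prod_le_prod_replaceByGeomMean hp0 hne hlt.le ω
            (card_le_card_of_sum_sub_nonpos (mem_filter.1 hω).2)
    _ ≤ _ := by
      rw [Fintype.card_fin, neg_mul_neg, ← hsum]
      exact pow_le_exp_mul_log (sum_nonneg fun y _ => hq y) n
end

section
/- Let T be a Huffman tree built on a finite set of leaves with positive values, with values of internal nodes equal to the sum of their children's values, and root value 1. Then for any vertex V of T, the depth of V satisfies D_T(V) ≤ 2⌈log₂(1/v(V))⌉. In other words, Huffman codes are 2-balanced. -/
/-- Binary trees with real-valued leaves. -/
inductive HTree where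
  | leaf : ℝ → HTree
  | node : HTree → HTree → HTree

noncomputable instance : DecidableEq HTree := Classical.decEq _

namespace HTree

/-- The value of a vertex: the value of a leaf, or the sum of the children's values. -/
noncomputable def val : HTree → ℝ
  | leaf v => v
  | node l r => val l + val r

/-- `AtDepth T d V` means `V` is a vertex of `T` at depth `d`. -/
inductive AtDepth : HTree → ℕ → HTree → Prop
  | refl (t : HTree) : AtDepth t 0 t
  | left {l r v : HTree} {d : ℕ} : AtDepth l d v → AtDepth (node l r) (d + 1) v
  | right {l r v : HTree} {d : ℕ} : AtDepth r d v → AtDepth (node l r) (d + 1) v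

/-- `Builds s T` means the Huffman merging process (repeatedly merging the two
vertices of smallest value in the pool) can turn the pool `s` into the single tree `T`. -/
inductive Builds : Multiset HTree → HTree → Prop
  | single (t : HTree) : Builds {t} t
  | merge {s : Multiset HTree} {t1 t2 root : HTree}
      (h1 : t1 ∈ s) (h2 : t2 ∈ s.erase t1)
      (hmin : ∀ t ∈ (s.erase t1).erase t2, t1.val ≤ t.val ∧ t2.val ≤ t.val)
      (h : Builds (HTree.node t1 t2 ::ₘ (s.erase t1).erase t2) root) :
      Builds s root

end HTree

namespace HTree

/-- All leaves have positive values. -/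
def AllPos : HTree → Prop
  | leaf v => 0 < v
  | node l r => AllPos l ∧ AllPos r

/-- The maximum value of a child (0 for a leaf). -/
noncomputable def maxChild : HTree → ℝ
  | leaf _ => 0
  | node l r => max l.val r.val

/-- The Huffman sibling property: at every internal node, each child's value
dominates the values of the other child's children. -/
def Huff : HTree → Prop
  | leaf _ => True
  | node l r => Huff l ∧ Huff r ∧ maxChild l ≤ r.val ∧ maxChild r ≤ l.val

lemma val_pos : ∀ t, AllPos t → 0 < t.val
  | leaf v, h => h
  | node l r, ⟨hl, hr⟩ => add_pos (val_pos l hl) (val_pos r hr)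

lemma builds_huff {s : Multiset HTree} {T : HTree} (hb : Builds s T) :
    (∀ t ∈ s, AllPos t ∧ Huff t) → (∀ t ∈ s, ∀ u ∈ s, maxChild t ≤ u.val) →
    AllPos T ∧ Huff T := by
  induction hb with
  | single t =>
    intro h1 _
    exact h1 t (Multiset.mem_singleton_self t)
  | merge hm1 hm2 hmin hb ih =>
    rename_i s t1 t2 root
    intro h1 h2
    have ht2s : t2 ∈ s := Multiset.mem_of_mem_erase hm2
    have hrs : ∀ t ∈ (s.erase t1).erase t2, t ∈ s := fun t ht =>
      Multiset.mem_of_mem_erase (Multiset.mem_of_mem_erase ht)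
    have hp1 : 0 < t1.val := val_pos t1 (h1 t1 hm1).1
    have hp2 : 0 < t2.val := val_pos t2 (h1 t2 ht2s).1
    have hvalc : (node t1 t2).val = t1.val + t2.val := rfl
    have hmc : maxChild (node t1 t2) = max t1.val t2.val := rfl
    apply ih
    · intro t ht
      rcases Multiset.mem_cons.1 ht with rfl | ht
      · refine ⟨⟨(h1 t1 hm1).1, (h1 t2 ht2s).1⟩,
          (h1 t1 hm1).2, (h1 t2 ht2s).2, h2 t1 hm1 t2 ht2s, h2 t2 ht2s t1 hm1⟩
      · exact h1 t (hrs t ht)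
    · intro t ht u hu
      rcases Multiset.mem_cons.1 ht with rfl | ht
      · rw [hmc]
        rcases Multiset.mem_cons.1 hu with rfl | hu
        · rw [hvalc]
          exact max_le (le_add_of_nonneg_right hp2.le) (le_add_of_nonneg_left hp1.le)
        · exact max_le (hmin u hu).1 (hmin u hu).2
      · rcases Multiset.mem_cons.1 hu with rfl | hu
        · rw [hvalc]
          exact le_trans (h2 t (hrs t ht) t1 hm1) (le_add_of_nonneg_right hp2.le)
        · exact h2 t (hrs t ht) u (hrs u hu)

lemma atDepth_sub {T V : HTree} {d : ℕ} (h : AtDepth T d V) :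
    AllPos T → Huff T → AllPos V ∧ Huff V := by
  induction h with
  | refl t => exact fun hp hh => ⟨hp, hh⟩
  | left _ ih => exact fun hp hh => ih hp.1 hh.1
  | right _ ih => exact fun hp hh => ih hp.2 hh.2.1

lemma depth_bound (d : ℕ) : ∀ T V : HTree, Huff T → AllPos T → AtDepth T d V →
    (2:ℝ)^((d+1)/2) * V.val < 2 * T.val := by
  induction d using Nat.strong_induction_on with
  | _ d ih =>
    intro T V hH hP hD
    cases hD with
    | refl =>
      have := val_pos T hP
      norm_num
      linarith
    | left hl =>
      rename_i l r e
      obtain ⟨hPl, hPr⟩ := hP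
      obtain ⟨hHl, hHr, hlr, hrl⟩ := hH
      have hvr : 0 < r.val := val_pos r hPr
      have hT : (node l r).val = l.val + r.val := rfl
      cases hl with
      | refl =>
        rw [hT]
        have := val_pos _ hPl
        norm_num
        linarith
      | left ha =>
        rename_i a b f
        obtain ⟨hPa, hPb⟩ := hPl
        obtain ⟨hHa, hHb, _, _⟩ := hHl
        have hva : maxChild (node a b) ≤ r.val := hlr
        have hva' : a.val ≤ r.val := le_trans (le_max_left _ _) hva
        have hvb : 0 < b.val := val_pos b hPb
        have key := ih f (by omega) a V hHa hPa ha
        have hl' : (node a b).val = a.val + b.val := rfl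
        have hdiv : (f + 1 + 1 + 1)/2 = (f+1)/2 + 1 := by omega
        rw [hT, hl', hdiv, pow_succ]
        nlinarith
      | right hb =>
        rename_i a b f
        obtain ⟨hPa, hPb⟩ := hPl
        obtain ⟨hHa, hHb, _, _⟩ := hHl
        have hvb : maxChild (node a b) ≤ r.val := hlr
        have hvb' : b.val ≤ r.val := le_trans (le_max_right _ _) hvb
        have hva : 0 < a.val := val_pos a hPa
        have key := ih f (by omega) b V hHb hPb hb
        have hl' : (node a b).val = a.val + b.val := rfl
        have hdiv : (f + 1 + 1 + 1)/2 = (f+1)/2 + 1 := by omega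
        rw [hT, hl', hdiv, pow_succ]
        nlinarith
    | right hr =>
      rename_i l r e
      obtain ⟨hPl, hPr⟩ := hP
      obtain ⟨hHl, hHr, hlr, hrl⟩ := hH
      have hvl : 0 < l.val := val_pos l hPl
      have hT : (node l r).val = l.val + r.val := rfl
      cases hr with
      | refl =>
        rw [hT]
        have := val_pos _ hPr
        norm_num
        linarith
      | left ha =>
        rename_i a b f
        obtain ⟨hPa, hPb⟩ := hPr
        obtain ⟨hHa, hHb, _, _⟩ := hHr
        have hva : maxChild (node a b) ≤ l.val := hrl
        have hva' : a.val ≤ l.val := le_trans (le_max_left _ _) hva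
        have hvb : 0 < b.val := val_pos b hPb
        have key := ih f (by omega) a V hHa hPa ha
        have hr' : (node a b).val = a.val + b.val := rfl
        have hdiv : (f + 1 + 1 + 1)/2 = (f+1)/2 + 1 := by omega
        rw [hT, hr', hdiv, pow_succ]
        nlinarith
      | right hb =>
        rename_i a b f
        obtain ⟨hPa, hPb⟩ := hPr
        obtain ⟨hHa, hHb, _, _⟩ := hHr
        have hvb : maxChild (node a b) ≤ l.val := hrl
        have hvb' : b.val ≤ l.val := le_trans (le_max_right _ _) hvb
        have hva : 0 < a.val := val_pos a hPa
        have key := ih f (by omega) b V hHb hPb hb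
        have hr' : (node a b).val = a.val + b.val := rfl
        have hdiv : (f + 1 + 1 + 1)/2 = (f+1)/2 + 1 := by omega
        rw [hT, hr', hdiv, pow_succ]
        nlinarith

end HTree

/-- Huffman codes are 2-balanced: in a Huffman tree of root value 1 built on leaves of
positive values, every vertex `V` has depth at most `2 ⌈log₂ (1 / v(V))⌉`. -/
theorem huffman_two_balanced (s : Multiset HTree)
    (hleaf : ∀ t ∈ s, ∃ v : ℝ, 0 < v ∧ t = HTree.leaf v)
    (T : HTree) (hbuild : HTree.Builds s T) (hroot : T.val = 1)
    (V : HTree) (d : ℕ) (hV : HTree.AtDepth T d V) :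
    (d : ℤ) ≤ 2 * ⌈Real.logb 2 (1 / V.val)⌉ := by
  have hInv1 : ∀ t ∈ s, HTree.AllPos t ∧ HTree.Huff t := by
    intro t ht
    obtain ⟨v, hv, rfl⟩ := hleaf t ht
    exact ⟨hv, trivial⟩
  have hInv2 : ∀ t ∈ s, ∀ u ∈ s, HTree.maxChild t ≤ u.val := by
    intro t ht u hu
    obtain ⟨v, hv, rfl⟩ := hleaf t ht
    obtain ⟨w, hw, rfl⟩ := hleaf u hu
    simpa [HTree.maxChild, HTree.val] using hw.le
  obtain ⟨hP, hH⟩ := HTree.builds_huff hbuild hInv1 hInv2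
  have hvpos : 0 < V.val := HTree.val_pos V (HTree.atDepth_sub hV hP hH).1
  have key : (2:ℝ)^((d+1)/2) * V.val < 2 * T.val := HTree.depth_bound d T V hH hP hV
  rw [hroot] at key
  set k : ℕ := (d+1)/2 with hk
  -- V.val < 2 / 2^k, hence 1/V.val > 2^k / 2
  have h2k : (0:ℝ) < 2^k := by positivity
  have hfrac : (2:ℝ)^k / 2 < 1 / V.val := by
    rw [div_lt_div_iff₀ two_pos hvpos]
    nlinarith
  have hlog : (k:ℝ) - 1 < Real.logb 2 (1 / V.val) := by
    have h1 : Real.logb 2 ((2:ℝ)^k / 2) < Real.logb 2 (1 / V.val) :=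
      Real.logb_lt_logb one_lt_two (by positivity) hfrac
    have h2 : Real.logb 2 ((2:ℝ)^k / 2) = (k:ℝ) - 1 := by
      rw [Real.logb_div (by positivity) two_ne_zero, Real.logb_pow, Real.logb_self_eq_one] <;>
        norm_num
    linarith [h1, h2.symm.le]
  have hceil : (k : ℤ) ≤ ⌈Real.logb 2 (1 / V.val)⌉ := by
    have : ((k : ℤ) - 1 : ℤ) < ⌈Real.logb 2 (1 / V.val)⌉ := by
      rw [Int.lt_ceil]
      push_cast
      linarith
    omega
  have hdk : (d : ℤ) ≤ 2 * (k : ℤ) := by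
    have : d ≤ 2 * k := by omega
    exact_mod_cast this
  omega
end

section
/- Let p ∈ Δ(Y) with p(y_1) > p(y_i) for all i ≥ 2. With ∇_i = p(y_1) - p(y_i) and Δ_i² = -ln(1 - (√p(y_1) - √p(y_i))²), the following two-sided bound holds: (p(y_1)/(-ln(1 - p(y_1)))) · p(y_1) ∇_i^{-2} ≤ Δ_i^{-2} ≤ 4 p(y_1) ∇_i^{-2}. -/
/-!
Write `a = p y₁`, `b = p yᵢ` and `s = (√a - √b)²`, so that `∇ = (√a - √b)(√a + √b)` and
`a s ≤ ∇² ≤ 4 a s`. Both bounds then compare `Δ² = -log (1 - s)` with `s`: from below by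
`-log (1 - s) ≥ s`, and from above by the chord of the convex function `x ↦ -log (1 - x)`
on `[0, a]`, which gives `-log (1 - s) ≤ (s / a) (-log (1 - a))` since `s ≤ ∇ ≤ a`.
-/

open Real

namespace Real

lemma mul_log_one_sub_le_log_one_sub_mul {θ x : ℝ} (hθ₀ : 0 ≤ θ) (hθ₁ : θ ≤ 1) (hx : x < 1) :
    θ * log (1 - x) ≤ log (1 - θ * x) := by
  have hconc := strictConcaveOn_log_Ioi.concaveOn.2 (Set.mem_Ioi.2 one_pos)
    (Set.mem_Ioi.2 (sub_pos.2 hx)) (sub_nonneg.2 hθ₁) hθ₀ (sub_add_cancel 1 θ)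
  simp only [smul_eq_mul, log_one, mul_zero, zero_add] at hconc
  rwa [show (1 - θ) * 1 + θ * (1 - x) = 1 - θ * x by ring] at hconc

lemma le_neg_log_one_sub {s : ℝ} (hs : s < 1) : s ≤ -log (1 - s) := by
  linarith [log_le_sub_one_of_pos (sub_pos.2 hs)]

lemma sq_sub_eq_sq_sub_sqrt_mul_sq_add_sqrt {a b : ℝ} (ha : 0 ≤ a) (hb : 0 ≤ b) :
    (a - b) ^ 2 = (√a - √b) ^ 2 * (√a + √b) ^ 2 := by
  rw [← mul_pow, ← sq_sqrt ha, ← sq_sqrt hb]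
  simp only [sqrt_sq (sqrt_nonneg _)]
  ring

lemma mul_sq_sub_sqrt_le_sq_sub {a b : ℝ} (ha : 0 ≤ a) (hb : 0 ≤ b) :
    a * (√a - √b) ^ 2 ≤ (a - b) ^ 2 := by
  rw [sq_sub_eq_sq_sub_sqrt_mul_sq_add_sqrt ha hb, mul_comm]
  gcongr
  calc a = √a ^ 2 := (sq_sqrt ha).symm
    _ ≤ (√a + √b) ^ 2 := by gcongr; exact le_add_of_nonneg_right (sqrt_nonneg b)

lemma sq_sub_le_four_mul_mul_sq_sub_sqrt {a b : ℝ} (hb : 0 ≤ b) (hba : b ≤ a) :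
    (a - b) ^ 2 ≤ 4 * a * (√a - √b) ^ 2 := by
  have ha : 0 ≤ a := hb.trans hba
  rw [sq_sub_eq_sq_sub_sqrt_mul_sq_add_sqrt ha hb, mul_comm]
  gcongr
  calc (√a + √b) ^ 2 ≤ (√a + √a) ^ 2 := by gcongr
    _ = 4 * a := by rw [← two_mul, mul_pow, sq_sqrt ha]; norm_num

lemma sq_sub_sqrt_le_sub {a b : ℝ} (hb : 0 ≤ b) (hba : b ≤ a) : (√a - √b) ^ 2 ≤ a - b := by
  have ha : 0 ≤ a := hb.trans hba
  have hsqrt : √b ≤ √a := sqrt_le_sqrt hba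
  nlinarith [sq_sqrt ha, sq_sqrt hb, sqrt_nonneg b]

end Real

theorem delta_nabla_comparison_general {Y : Type*} (p : Y → ℝ)
    (hp0 : ∀ y, 0 ≤ p y)
    (y1 yi : Y) (hi1 : p yi < p y1) (h1lt : p y1 < 1) :
    let nab := p y1 - p yi
    let Dsq := -Real.log (1 - (Real.sqrt (p y1) - Real.sqrt (p yi)) ^ 2)
    (p y1 / (-Real.log (1 - p y1))) * p y1 / nab ^ 2 ≤ Dsq⁻¹ ∧
      Dsq⁻¹ ≤ 4 * p y1 / nab ^ 2 := by
  intro nab Dsq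
  set a := p y1
  set b := p yi
  set s := (√a - √b) ^ 2
  have hb : 0 ≤ b := hp0 yi
  have ha : 0 < a := hb.trans_lt hi1
  have hs : 0 < s := pow_pos (sub_pos.2 (sqrt_lt_sqrt hb hi1)) 2
  have hsa : s ≤ a := (sq_sub_sqrt_le_sub hb hi1.le).trans (by linarith)
  have hL : 0 < -log (1 - a) := neg_pos.2 (log_neg (by linarith) (by linarith))
  have hDs : s ≤ Dsq := le_neg_log_one_sub (by linarith)
  have hDchord : Dsq ≤ s / a * -log (1 - a) := by
    have := mul_log_one_sub_le_log_one_sub_mul (div_nonneg hs.le ha.le)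
      ((div_le_one ha).2 hsa) h1lt
    rw [div_mul_cancel₀ s ha.ne'] at this
    linarith
  constructor
  · calc a / -log (1 - a) * a / nab ^ 2 ≤ a / -log (1 - a) * a / (a * s) := by
          gcongr
          exact mul_sq_sub_sqrt_le_sq_sub ha.le hb
      _ = (s / a * -log (1 - a))⁻¹ := by field_simp
      _ ≤ Dsq⁻¹ := inv_anti₀ (hs.trans_le hDs) hDchord
  · calc Dsq⁻¹ ≤ s⁻¹ := inv_anti₀ hs hDs
      _ = 4 * a / (4 * a * s) := by field_simp
      _ ≤ 4 * a / nab ^ 2 := by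
          gcongr
          exact sq_sub_le_four_mul_mul_sq_sub_sqrt hb hi1.le

theorem delta_nabla_comparison {Y : Type*} [Fintype Y] (p : Y → ℝ)
    (hp0 : ∀ y, 0 ≤ p y) (hp1 : ∑ y, p y = 1)
    (y1 yi : Y) (hi1 : p yi < p y1) (h1lt : p y1 < 1) :
    let nab := p y1 - p yi
    let Dsq := -Real.log (1 - (Real.sqrt (p y1) - Real.sqrt (p yi)) ^ 2)
    (p y1 / (-Real.log (1 - p y1))) * p y1 / nab ^ 2 ≤ Dsq⁻¹ ∧
      Dsq⁻¹ ≤ 4 * p y1 / nab ^ 2 :=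
  delta_nabla_comparison_general p hp0 y1 yi hi1 h1lt
end

section
/- Upper bound side: for 0 ≤ q < p < 1, -ln(1 - (√p - √q)²) ≤ ((p - q)²/p) · (-ln(1-p)/p). Equivalently Δ² ≤ ∇² · (-ln(1-p))/p², where ∇ = p - q. -/
/-!
Concavity of `log` makes the secant slope `-log (1 - x) / x` of `x ↦ -log (1 - x)` from `0`
nondecreasing, so `-log (1 - x) ≤ x · (-log (1 - p) / p)` for `0 < x ≤ p`. Apply this to
`x = (p - q)² / p`, which dominates `(√p - √q)² = (p - q)² / (√p + √q)²` and is at most `p`.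
-/

open Real

theorem neg_log_one_sub_div_le {x p : ℝ} (hx : 0 < x) (hxp : x ≤ p) (hp : p < 1) :
    -log (1 - x) / x ≤ -log (1 - p) / p := by
  have hslope := strictConcaveOn_log_Ioi.concaveOn.neg.secant_mono (a := 1) (x := 1 - p)
    (y := 1 - x) (by norm_num) (by simp; linarith) (by simp; linarith) (by linarith)
    (by linarith) (by linarith)
  simp only [Pi.neg_apply, log_one, neg_zero, sub_zero, sub_sub_cancel_left, div_neg,
    neg_div, neg_neg] at hslope
  simpa only [neg_div, neg_le_neg_iff] using hslope

theorem sq_sqrt_sub_sqrt_le {p q : ℝ} (hp : 0 < p) (hq : 0 ≤ q) :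
    (√p - √q) ^ 2 ≤ (p - q) ^ 2 / p := by
  have hprod : (√p - √q) * (√p + √q) = p - q := by
    rw [mul_comm, ← sq_sub_sq, sq_sqrt hp.le, sq_sqrt hq]
  have hsum : p ≤ (√p + √q) ^ 2 := by
    nlinarith [sq_sqrt hp.le, sqrt_nonneg p, sqrt_nonneg q]
  rw [le_div_iff₀ hp, ← hprod, mul_pow]
  exact mul_le_mul_of_nonneg_left hsum (sq_nonneg _)

theorem delta_upper_bound (p q : ℝ) (hq : 0 ≤ q) (hqp : q < p) (hp : p < 1) :
    -Real.log (1 - (Real.sqrt p - Real.sqrt q) ^ 2)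
      ≤ (p - q) ^ 2 * (-Real.log (1 - p)) / p ^ 2 := by
  have hp0 : 0 < p := hq.trans_lt hqp
  set x := (p - q) ^ 2 / p with hx
  have hx0 : 0 < x := div_pos (pow_pos (sub_pos.2 hqp) 2) hp0
  have hxp : x ≤ p := div_le_of_le_mul₀ hp0.le hp0.le (by nlinarith)
  calc -log (1 - (√p - √q) ^ 2)
      ≤ -log (1 - x) :=
        neg_le_neg (log_le_log (by linarith) (by linarith [sq_sqrt_sub_sqrt_le hp0 hq]))
    _ = x * (-log (1 - x) / x) := (mul_div_cancel₀ _ hx0.ne').symm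
    _ ≤ x * (-log (1 - p) / p) :=
        mul_le_mul_of_nonneg_left (neg_log_one_sub_div_le hx0 hxp hp) hx0.le
    _ = (p - q) ^ 2 * (-log (1 - p)) / p ^ 2 := by rw [hx]; field_simp
end

section
/- Sub-optimality of the discrete information projection: with Q = {q ∈ Δ(Y) : argmax q ≠ argmax p} and Q_{n,-} = {q ∈ Δ(Y) ∩ n^{-1}ℕ^Y : y_1 ∉ argmax q}, one has min_{q ∈ Q_{n,-}} D(q‖p) ≤ min_{q ∈ Q} D(q‖p) + C_p/n for a constant C_p depending only on p (and m), for all n larger than m. -/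
open Finset Real

/-!
Write `F q = ∑ q log (q / p)`. If `p > 0`, the Gibbs variational inequality
`∑ q g - log ∑ p e^g ≤ F q` with `g = t (δ_z - δ_{y1})` and `e^{2t} = p y1 / p y2` bounds `F` below
on `{q y1 ≤ q z}` by `-log Z_z ≥ -log Z_{y2}`; the tilt of `p` by `g` for `z = y2` has
`a y1 = a y2`, hence attains the bound. If `p y0 = 0`, mass on `y0` costs nothing
(`log (x / 0) = 0`), and `a = p / e + (1 - 1 / e) δ_{y0}` attains the pointwise bound
`x log (x / p) ≥ -p / e`. Rounding the minimiser `a` strictly down at every coordinate but `z`,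
which takes the rest, keeps `y1` below `z` and moves each coordinate by at most `|Y| / n`; near `a`,
`F` is Lipschitz with a constant depending only on `a`, hence on `p`.
-/

lemma log_div_eq_log_div_add_log_div {x a p : ℝ} (hx : x ≠ 0) (ha : a ≠ 0) (hp : p ≠ 0) :
    log (x / p) = log (x / a) + log (a / p) := by
  rw [← log_mul (div_ne_zero hx ha) (div_ne_zero ha hp), div_mul_div_cancel₀ ha]

lemma tangent_le_mul_log_div {p a x : ℝ} (hp : 0 < p) (ha : 0 < a) (hx : 0 ≤ x) :
    (log (a / p) + 1) * x - a ≤ x * log (x / p) := by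
  rcases hx.eq_or_lt with rfl | hx
  · simpa using ha.le
  have h := one_sub_inv_le_log_of_pos (div_pos hx ha)
  rw [inv_div] at h
  have : x - a ≤ x * log (x / a) := by
    have := mul_le_mul_of_nonneg_left h hx.le
    rwa [mul_sub, mul_one, mul_div_cancel₀ _ hx.ne'] at this
  rw [log_div_eq_log_div_add_log_div hx.ne' ha.ne' hp.ne']
  linarith

lemma mul_log_div_le_add_abs_sub_mul {p a x : ℝ} (ha : 0 < a) (hx : 0 ≤ x) (hx1 : x ≤ 1) :
    x * log (x / p) ≤ a * log (a / p) + |x - a| * (|log (a / p)| + a⁻¹) := by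
  rcases eq_or_ne p 0 with rfl | hp
  · simp only [div_zero, log_zero, mul_zero, abs_zero, zero_add]
    positivity
  rcases hx.eq_or_lt with rfl | hx
  · rw [zero_sub, abs_neg, abs_of_pos ha, mul_add, mul_inv_cancel₀ ha.ne', zero_mul]
    nlinarith [neg_abs_le (log (a / p))]
  rw [log_div_eq_log_div_add_log_div hx.ne' ha.ne' hp, mul_add]
  have h1 : x * log (x / a) ≤ |x - a| * a⁻¹ := calc
    x * log (x / a) ≤ x * (x / a - 1) :=
      mul_le_mul_of_nonneg_left (log_le_sub_one_of_pos (by positivity)) hx.le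
    _ = x * (x - a) * a⁻¹ := by field_simp
    _ ≤ |x - a| * a⁻¹ := by gcongr; cases abs_cases (x - a) <;> nlinarith
  have h2 : (x - a) * log (a / p) ≤ |x - a| * |log (a / p)| := by
    rw [← abs_mul]; exact le_abs_self _
  linarith

lemma neg_mul_exp_neg_one_le_mul_log_div {p x : ℝ} (hp : 0 ≤ p) (hx : 0 ≤ x) :
    -(p * exp (-1)) ≤ x * log (x / p) := by
  rcases hp.eq_or_lt with rfl | hp
  · simp
  have h := tangent_le_mul_log_div hp (mul_pos hp (exp_pos (-1))) hx
  rwa [mul_div_cancel_left₀ _ hp.ne', log_exp, neg_add_cancel, zero_mul, zero_sub] at h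

lemma Nat.sub_one_le_cast_ceil_sub_one (x : ℝ) : x - 1 ≤ ((⌈x⌉₊ - 1 : ℕ) : ℝ) := by
  rcases Nat.eq_zero_or_pos ⌈x⌉₊ with h | h
  · rw [h, Nat.zero_sub, Nat.cast_zero, sub_nonpos]
    exact (Nat.ceil_eq_zero.1 h).trans zero_le_one
  · rw [Nat.cast_pred h]; linarith [Nat.le_ceil x]

lemma Nat.cast_ceil_sub_one_lt {x : ℝ} (hx : 0 < x) : ((⌈x⌉₊ - 1 : ℕ) : ℝ) < x :=
  Nat.lt_ceil.1 (Nat.sub_one_lt (Nat.ceil_pos.2 hx).ne')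

lemma Nat.cast_ceil_sub_one_le {x : ℝ} (hx : 0 ≤ x) : ((⌈x⌉₊ - 1 : ℕ) : ℝ) ≤ x := by
  rcases hx.eq_or_lt with rfl | hx
  · simp
  · exact (Nat.cast_ceil_sub_one_lt hx).le

section Simplex

variable {Y : Type*} [Fintype Y]

noncomputable def relEntropy (q p : Y → ℝ) : ℝ := ∑ y, q y * log (q y / p y)

noncomputable def tilt (p g : Y → ℝ) : Y → ℝ := fun y => p y * exp (g y) / ∑ x, p x * exp (g x)

def notStrictMode (y1 : Y) : Set (Y → ℝ) := {q | q ∈ stdSimplex ℝ Y ∧ ∃ z ≠ y1, q y1 ≤ q z}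

section Tilt

variable {p : Y → ℝ} (g : Y → ℝ)

lemma sum_mul_exp_pos [Nonempty Y] (hp : ∀ y, 0 < p y) : 0 < ∑ y, p y * exp (g y) :=
  sum_pos (fun y _ => by have := hp y; positivity) univ_nonempty

lemma tilt_pos [Nonempty Y] (hp : ∀ y, 0 < p y) (y : Y) : 0 < tilt p g y := by
  have := hp y; have := sum_mul_exp_pos g hp; unfold tilt; positivity

lemma tilt_mem_stdSimplex [Nonempty Y] (hp : ∀ y, 0 < p y) : tilt p g ∈ stdSimplex ℝ Y :=
  ⟨fun y => (tilt_pos g hp y).le,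
    by simp only [tilt]; rw [← sum_div, div_self (sum_mul_exp_pos g hp).ne']⟩

lemma log_tilt_div [Nonempty Y] (hp : ∀ y, 0 < p y) (y : Y) :
    log (tilt p g y / p y) = g y - log (∑ x, p x * exp (g x)) := by
  rw [tilt, mul_div_assoc, mul_div_cancel_left₀ _ (hp y).ne',
    log_div (exp_pos _).ne' (sum_mul_exp_pos g hp).ne', log_exp]

lemma relEntropy_tilt [Nonempty Y] (hp : ∀ y, 0 < p y) :
    relEntropy (tilt p g) p = ∑ y, tilt p g y * g y - log (∑ y, p y * exp (g y)) := by
  simp only [relEntropy, log_tilt_div g hp, mul_sub, sum_sub_distrib, ← sum_mul,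
    (tilt_mem_stdSimplex g hp).2, one_mul]

lemma sum_mul_sub_log_sum_exp_le_relEntropy (hp : ∀ y, 0 < p y) {q : Y → ℝ}
    (hq : q ∈ stdSimplex ℝ Y) :
    ∑ y, q y * g y - log (∑ y, p y * exp (g y)) ≤ relEntropy q p := by
  have : Nonempty Y := by
    by_contra h
    simpa [not_nonempty_iff.mp h] using hq.2
  have tangent (y : Y) := tangent_le_mul_log_div (hp y) (tilt_pos g hp y) (hq.1 y)
  simp only [log_tilt_div g hp] at tangent
  calc ∑ y, q y * g y - log (∑ y, p y * exp (g y))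
      = ∑ y, ((g y - log (∑ x, p x * exp (g x)) + 1) * q y - tilt p g y) := by
        simp only [sum_sub_distrib, add_mul, sub_mul, sum_add_distrib, ← mul_sum, one_mul, hq.2,
          (tilt_mem_stdSimplex g hp).2, mul_comm (g _)]
        ring
    _ ≤ relEntropy q p := sum_le_sum fun y _ => tangent y

end Tilt

lemma sum_mul_ite_ite [DecidableEq Y] (f : Y → ℝ) {z y1 : Y} (h : z ≠ y1) (b c d : ℝ) :
    ∑ y, f y * (if y = z then b else if y = y1 then c else d)
      = d * ∑ y, f y + f z * (b - d) + f y1 * (c - d) := by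
  have hsplit (y : Y) : f y * (if y = z then b else if y = y1 then c else d)
      = d * f y + f y * ((if y = z then b else if y = y1 then c else d) - d) := by ring
  have hpair : ∑ y, f y * ((if y = z then b else if y = y1 then c else d) - d)
      = f z * (b - d) + f y1 * (c - d) := by
    rw [Fintype.sum_eq_add z y1 h fun y hy => by rw [if_neg hy.1, if_neg hy.2, sub_self, mul_zero]]
    simp [h.symm]
  rw [sum_congr rfl fun y _ => hsplit y, sum_add_distrib, ← mul_sum, add_assoc, hpair]

lemma exists_isMinOn_relEntropy_of_pos {p : Y → ℝ} (hp : ∀ y, 0 < p y) (hp1 : ∑ y, p y = 1)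
    {y1 y2 : Y} (h12 : y1 ≠ y2) (h21 : p y2 ≤ p y1) (hsec : ∀ y, y ≠ y1 → p y ≤ p y2) :
    ∃ a ∈ notStrictMode y1, (∀ y, 0 < a y) ∧ IsMinOn (relEntropy · p) (notStrictMode y1) a := by
  classical
  have : Nonempty Y := ⟨y1⟩
  set t := log (p y1 / p y2) / 2 with ht
  have ht0 : 0 ≤ t := div_nonneg (log_nonneg ((one_le_div (hp y2)).2 h21)) zero_le_two
  -- the exponent `t`, balanced for `z = y2`, serves every `z` at once (see `hZle`)
  let g (z y : Y) : ℝ := if y = z then t else if y = y1 then -t else 0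
  have hqg (q : Y → ℝ) {z : Y} (hz : z ≠ y1) : ∑ y, q y * g z y = t * (q z - q y1) := by
    rw [sum_mul_ite_ite q hz]; ring
  have hZ {z : Y} (hz : z ≠ y1) :
      ∑ y, p y * exp (g z y) = 1 + p z * (exp t - 1) + p y1 * (exp (-t) - 1) := by
    simp only [g, apply_ite exp, exp_zero]
    rw [sum_mul_ite_ite p hz, hp1, one_mul]
  have hbalance : p y1 * exp (-t) = p y2 * exp t := by
    have : exp t * exp t = p y1 / p y2 := by
      rw [← exp_add, ht, add_halves, exp_log (div_pos (hp y1) (hp y2))]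
    rw [exp_neg, ← div_eq_mul_inv, div_eq_iff (exp_pos t).ne', mul_assoc, this,
      mul_div_cancel₀ _ (hp y2).ne']
  have htied : tilt p (g y2) y1 = tilt p (g y2) y2 := by
    simp only [tilt, g, if_neg h12, if_pos rfl, ite_true, hbalance]
  refine ⟨tilt p (g y2), ⟨tilt_mem_stdSimplex _ hp, y2, h12.symm, htied.le⟩, tilt_pos _ hp,
    isMinOn_iff.2 fun q ⟨hq, z, hz, hle⟩ => ?_⟩
  have hZle : ∑ y, p y * exp (g z y) ≤ ∑ y, p y * exp (g y2 y) := by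
    rw [hZ hz, hZ h12.symm]
    linarith [mul_le_mul_of_nonneg_right (hsec z hz) (sub_nonneg.2 (one_le_exp ht0))]
  calc relEntropy (tilt p (g y2)) p = -log (∑ y, p y * exp (g y2 y)) := by
        rw [relEntropy_tilt _ hp, hqg _ h12.symm, htied, sub_self, mul_zero, zero_sub]
    _ ≤ -log (∑ y, p y * exp (g z y)) := neg_le_neg (log_le_log (sum_mul_exp_pos _ hp) hZle)
    _ ≤ ∑ y, q y * g z y - log (∑ y, p y * exp (g z y)) := by
        rw [hqg q hz]; linarith [mul_nonneg ht0 (sub_nonneg.2 hle)]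
    _ ≤ relEntropy q p := sum_mul_sub_log_sum_exp_le_relEntropy _ hp hq

lemma exists_isMinOn_relEntropy_of_eq_zero {p : Y → ℝ} (hp0 : ∀ y, 0 ≤ p y)
    (hp1 : ∑ y, p y = 1) {y0 y1 : Y} (h01 : y0 ≠ y1) (hy0 : p y0 = 0) :
    ∃ a ∈ notStrictMode y1, (∀ y, p y ≠ 0 → 0 < a y) ∧
      IsMinOn (relEntropy · p) (notStrictMode y1) a := by
  classical
  have he : exp (-1) ≤ 1 / 2 := by
    rw [exp_neg, one_div]
    exact inv_anti₀ two_pos (by linarith [add_one_le_exp (1 : ℝ)])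
  -- `p / e` minimises each `x log (x / p)`, and as `log (x / 0) = 0` the rest sits on `y0` for free
  let a (y : Y) : ℝ := p y * exp (-1) + if y = y0 then 1 - exp (-1) else 0
  have ha_off {y : Y} (hy : y ≠ y0) : a y = p y * exp (-1) := by simp [a, hy]
  have hterm (y : Y) : a y * log (a y / p y) = -(p y * exp (-1)) := by
    rcases (hp0 y).eq_or_lt with hpy | hpy
    · simp [← hpy]
    rw [ha_off fun h => hpy.ne' (by rw [h, hy0]), mul_div_cancel_left₀ _ hpy.ne', log_exp]
    ring
  have hsum_neg : ∑ y, -(p y * exp (-1)) = -exp (-1) := by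
    rw [sum_neg_distrib, ← sum_mul, hp1, one_mul]
  refine ⟨a, ⟨⟨fun y => ?_, ?_⟩, y0, h01, ?_⟩, fun y hy => ?_,
    isMinOn_iff.2 fun q hq => ?_⟩
  · have := hp0 y
    have : 0 ≤ 1 - exp (-1) := by linarith
    positivity
  · simp only [a, sum_add_distrib, ← sum_mul, hp1, sum_ite_eq', mem_univ, if_true]
    ring
  · have hp1le : p y1 ≤ 1 := hp1 ▸ single_le_sum (fun y _ => hp0 y) (mem_univ y1)
    simp only [a, if_neg h01.symm, hy0, ite_true]
    linarith [mul_le_of_le_one_left (exp_pos (-1)).le hp1le]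
  · have hy' : y ≠ y0 := fun h => hy (h ▸ hy0)
    rw [ha_off hy']
    exact mul_pos ((hp0 y).lt_of_ne' hy) (exp_pos _)
  · calc relEntropy a p = -exp (-1) := by
          rw [relEntropy, sum_congr rfl fun y _ => hterm y, hsum_neg]
      _ ≤ relEntropy q p := hsum_neg ▸
          sum_le_sum fun y _ => neg_mul_exp_neg_one_le_mul_log_div (hp0 y) (hq.1.1 y)

lemma exists_isMinOn_relEntropy {p : Y → ℝ} (hp0 : ∀ y, 0 ≤ p y) (hp1 : ∑ y, p y = 1)
    {y1 y2 : Y} (h12 : y1 ≠ y2) (hmode : ∀ y, y ≠ y1 → p y < p y1)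
    (hsec : ∀ y, y ≠ y1 → p y ≤ p y2) :
    ∃ a ∈ notStrictMode y1, (∀ y, p y ≠ 0 → 0 < a y) ∧
      IsMinOn (relEntropy · p) (notStrictMode y1) a := by
  by_cases hpos : ∀ y, 0 < p y
  · obtain ⟨a, ha, ha_pos, hmin⟩ :=
      exists_isMinOn_relEntropy_of_pos hpos hp1 h12 (hmode y2 h12.symm).le hsec
    exact ⟨a, ha, fun y _ => ha_pos y, hmin⟩
  · push Not at hpos
    obtain ⟨y0, hy0⟩ := hpos
    have h01 : y0 ≠ y1 := by
      rintro rfl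
      linarith [hmode y2 h12.symm, hp0 y2]
    exact exists_isMinOn_relEntropy_of_eq_zero hp0 hp1 h01 (le_antisymm hy0 (hp0 y0))

lemma relEntropy_le_add_of_abs_sub_le {p q a : Y → ℝ} {δ : ℝ} (hq : q ∈ stdSimplex ℝ Y)
    (ha0 : ∀ y, 0 ≤ a y) (ha : ∀ y, p y ≠ 0 → 0 < a y) (hδ : ∀ y, |q y - a y| ≤ δ) :
    relEntropy q p ≤ relEntropy a p + δ * ∑ y, (|log (a y / p y)| + (a y)⁻¹) := by
  rw [relEntropy, relEntropy, mul_sum, ← sum_add_distrib]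
  refine sum_le_sum fun y _ => ?_
  rcases eq_or_ne (p y) 0 with hpy | hpy
  · simp only [hpy, div_zero, log_zero, mul_zero, abs_zero, zero_add]
    exact mul_nonneg ((abs_nonneg _).trans (hδ y)) (inv_nonneg.2 (ha0 y))
  have hq1 : q y ≤ 1 := hq.2 ▸ single_le_sum (fun y _ => hq.1 y) (mem_univ y)
  calc q y * log (q y / p y)
      ≤ a y * log (a y / p y) + |q y - a y| * (|log (a y / p y)| + (a y)⁻¹) :=
        mul_log_div_le_add_abs_sub_mul (ha y hpy) (hq.1 y) hq1
    _ ≤ a y * log (a y / p y) + δ * (|log (a y / p y)| + (a y)⁻¹) := by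
        have := ha0 y
        gcongr
        exact hδ y

lemma exists_round_down_except {a : Y → ℝ} (ha : a ∈ stdSimplex ℝ Y) (z : Y) {n : ℕ} (hn : 0 < n) :
    ∃ K : Y → ℕ, ∑ y, (K y : ℝ) = n ∧ (n * a z ≤ K z ∧ K z ≤ n * a z + Fintype.card Y) ∧
      ∀ y ≠ z, n * a y - 1 ≤ K y ∧ (K y : ℝ) ≤ n * a y ∧ (0 < a y → (K y : ℝ) < n * a y) := by
  classical
  let k (y : Y) : ℕ := ⌈n * a y⌉₊ - 1
  let t : ℕ := ∑ y ∈ univ.erase z, k y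
  have hk_le (y : Y) : (k y : ℝ) ≤ n * a y :=
    Nat.cast_ceil_sub_one_le (by have := ha.1 y; positivity)
  have hk_ge (y : Y) : n * a y - 1 ≤ k y := Nat.sub_one_le_cast_ceil_sub_one _
  have hsum_a : ∑ y ∈ univ.erase z, a y = 1 - a z := by rw [sum_erase_eq_sub (mem_univ z), ha.2]
  have ht_le : (t : ℝ) ≤ n * (1 - a z) := by
    simp only [t, Nat.cast_sum, ← hsum_a, mul_sum]
    exact sum_le_sum fun y _ => hk_le y
  have ht_ge : n * (1 - a z) - Fintype.card Y ≤ t := by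
    have hcard : ((univ.erase z).card : ℝ) ≤ Fintype.card Y := by exact_mod_cast card_le_univ _
    have : ∑ y ∈ univ.erase z, (n * a y - 1) ≤ t := by
      simp only [t, Nat.cast_sum]
      exact sum_le_sum fun y _ => hk_ge y
    rw [sum_sub_distrib, ← mul_sum, hsum_a, sum_const, nsmul_one] at this
    linarith
  have htn : t ≤ n := by
    have : (t : ℝ) ≤ n := ht_le.trans (by nlinarith [ha.1 z])
    exact_mod_cast this
  let K (y : Y) : ℕ := if y = z then n - t else k y
  have hKz : (K z : ℝ) = n - t := by simp [K, Nat.cast_sub htn]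
  have hK (y : Y) (hy : y ≠ z) : K y = k y := if_neg hy
  refine ⟨K, ?_, ⟨by rw [hKz]; linarith, by rw [hKz]; linarith⟩, fun y hy => ?_⟩
  · rw [← sum_erase_add _ _ (mem_univ z), hKz,
      sum_congr rfl fun y hy => congrArg (Nat.cast (R := ℝ)) (hK y (ne_of_mem_erase hy))]
    push_cast [t]
    ring
  · rw [hK y hy]
    exact ⟨hk_ge y, hk_le y, fun hay => Nat.cast_ceil_sub_one_lt (mul_pos (Nat.cast_pos.2 hn) hay)⟩

lemma exists_mem_stdSimplex_lattice_near {a : Y → ℝ} (ha : a ∈ stdSimplex ℝ Y) {y1 z : Y}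
    (hz : z ≠ y1) (ha1 : 0 < a y1) (hle : a y1 ≤ a z) {n : ℕ} (hn : 0 < n) :
    ∃ q ∈ stdSimplex ℝ Y, (∀ y, ∃ k : ℕ, q y = k / n) ∧ q y1 < q z ∧
      ∀ y, |q y - a y| ≤ Fintype.card Y / n := by
  have hn' : (0 : ℝ) < n := Nat.cast_pos.2 hn
  obtain ⟨K, hsum, ⟨hKz_ge, hKz_le⟩, hK⟩ := exists_round_down_except ha z hn
  refine ⟨fun y => K y / n, ⟨fun y => by positivity, by rw [← sum_div, hsum, div_self hn'.ne']⟩,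
    fun y => ⟨K y, rfl⟩, ?_, fun y => ?_⟩
  · calc (K y1 : ℝ) / n < a y1 := by
          rw [div_lt_iff₀ hn', mul_comm]
          exact (hK y1 hz.symm).2.2 ha1
      _ ≤ a z := hle
      _ ≤ K z / n := by rw [le_div_iff₀ hn']; linarith
  · have hm : (1 : ℝ) ≤ Fintype.card Y := Nat.one_le_cast.2 (Fintype.card_pos_iff.2 ⟨y⟩)
    rw [show (K y : ℝ) / n - a y = (K y - n * a y) / n by field_simp, abs_div, Nat.abs_cast]
    gcongr
    rw [abs_le]
    by_cases hy : y = z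
    · subst hy; constructor <;> linarith
    · obtain ⟨hge, hle, -⟩ := hK y hy
      constructor <;> linarith

end Simplex

theorem discrete_information_projection_suboptimality_general {Y : Type*} [Fintype Y]
    (p : Y → ℝ) (hp0 : ∀ y, 0 ≤ p y) (hp1 : ∑ y, p y = 1)
    (y1 y2 : Y) (h12 : y1 ≠ y2)
    (hmode : ∀ y, y ≠ y1 → p y < p y1)
    (hsec : ∀ y, y ≠ y1 → p y ≤ p y2) :
    ∃ C : ℝ, ∀ n : ℕ, Fintype.card Y < n →
      ∃ q : Y → ℝ, (∀ y, 0 ≤ q y) ∧ (∑ y, q y = 1) ∧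
        (∀ y, ∃ k : ℕ, q y = (k : ℝ) / n) ∧ (∃ z, q y1 < q z) ∧
        ∑ y, q y * Real.log (q y / p y)
          ≤ sInf {d : ℝ | ∃ q' : Y → ℝ, (∀ y, 0 ≤ q' y) ∧ (∑ y, q' y = 1) ∧
              (∃ z, z ≠ y1 ∧ q' y1 ≤ q' z) ∧ d = ∑ y, q' y * Real.log (q' y / p y)}
            + C / n := by
  obtain ⟨a, ⟨ha, z, hz, hle⟩, ha_pos, hmin⟩ := exists_isMinOn_relEntropy hp0 hp1 h12 hmode hsec
  refine ⟨Fintype.card Y * ∑ y, (|log (a y / p y)| + (a y)⁻¹), fun n hn => ?_⟩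
  have hy1 : 0 < a y1 := ha_pos y1 ((hp0 y2).trans_lt (hmode y2 h12.symm)).ne'
  obtain ⟨q, hq, hlattice, hlt, hclose⟩ :=
    exists_mem_stdSimplex_lattice_near ha hz hy1 hle (Nat.zero_lt_of_lt hn)
  refine ⟨q, hq.1, hq.2, hlattice, ⟨z, hlt⟩,
    (relEntropy_le_add_of_abs_sub_le hq ha.1 ha_pos hclose).trans ?_⟩
  rw [div_mul_eq_mul_div]
  gcongr
  exact le_csInf ⟨_, a, ha.1, ha.2, ⟨z, hz, hle⟩, rfl⟩ fun _ ⟨q', hq0, hq1, hq'z, hd⟩ =>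
    hd ▸ isMinOn_iff.1 hmin q' ⟨⟨hq0, hq1⟩, hq'z⟩

theorem discrete_information_projection_suboptimality {Y : Type*} [Fintype Y] [DecidableEq Y]
    (p : Y → ℝ) (hp0 : ∀ y, 0 ≤ p y) (hp1 : ∑ y, p y = 1)
    (y1 y2 : Y) (h12 : y1 ≠ y2)
    (hmode : ∀ y, y ≠ y1 → p y < p y1)
    (hsec : ∀ y, y ≠ y1 → p y ≤ p y2) (h2 : 0 < p y2) :
    ∃ C : ℝ, ∀ n : ℕ, Fintype.card Y < n →
      ∃ q : Y → ℝ, (∀ y, 0 ≤ q y) ∧ (∑ y, q y = 1) ∧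
        (∀ y, ∃ k : ℕ, q y = (k : ℝ) / n) ∧ (∃ z, q y1 < q z) ∧
        ∑ y, q y * Real.log (q y / p y)
          ≤ sInf {d : ℝ | ∃ q' : Y → ℝ, (∀ y, 0 ≤ q' y) ∧ (∑ y, q' y = 1) ∧
              (∃ z, z ≠ y1 ∧ q' y1 ≤ q' z) ∧ d = ∑ y, q' y * Real.log (q' y / p y)}
            + C / n :=
  discrete_information_projection_suboptimality_general p hp0 hp1 y1 y2 h12 hmode hsec
end
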